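/- Suppose every clade C(e) (e ∈ E) is nonempty. Then the Pareto condition Σ_{i ∈ X} ψ_i = PD(X) holds for all choices of positive edge lengths l : E → (0, ∞) and all extinction probabilities ε : X → (0, 1) if and only if every clade C(e) is a singleton (i.e. the tree is a star tree in which every leaf is adjacent to the root). -/

import Mathlib

/-!
Species `i` gains the length of edge `e` exactly when `i ∈ C e` and every other leaf of `C e` is
extinct, so `ψ i = ∑_{e ∋ i} l e * ∏_{j ∈ C e \ {i}} ε j` and
`∑ i, ψ i - PD X = ∑ e, l e * (∑_{i ∈ C e} ∏_{j ∈ C e \ {i}} ε j - 1)`.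
The bracket vanishes on singleton clades, while for `ε ≡ 1/4` it equals
`|C e| / 4 ^ (|C e| - 1) - 1 < 0` on every clade with at least two leaves.
-/

open Finset

/-- Rooted phylogenetic diversity: the sum of the lengths of edges `e` whose
clade `C e` meets `S`. -/
noncomputable def PD {X E : Type*} [Fintype E] [DecidableEq X]
    (l : E → ℝ) (C : E → Finset X) (S : Finset X) : ℝ :=
  ∑ e ∈ univ.filter (fun e => (C e ∩ S).Nonempty), l e

/-- Heightened evolutionary distinctiveness (HED) of species `i`:
the expected marginal contribution of `i` to phylogenetic diversity, under
independent extinctions with extinction probabilities `ε`. -/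
noncomputable def psi {X E : Type*} [Fintype X] [Fintype E] [DecidableEq X]
    (l : E → ℝ) (C : E → Finset X) (ε : X → ℝ) (i : X) : ℝ :=
  ∑ S ∈ ((univ : Finset X) \ {i}).powerset,
    ((∏ j ∈ S, (1 - ε j)) * ∏ j ∈ ((univ : Finset X) \ {i}) \ S, ε j) *
      (PD l C (S ∪ {i}) - PD l C S)

section SurvivalProb

variable {X R : Type*} [DecidableEq X] [CommRing R]

def survivalProb (ε : X → R) (A S : Finset X) : R :=
  (∏ j ∈ S, (1 - ε j)) * ∏ j ∈ A \ S, ε j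

theorem sum_survivalProb_disjoint (ε : X → R) {A B : Finset X} (hBA : B ⊆ A) :
    ∑ S ∈ A.powerset with Disjoint B S, survivalProb ε A S = ∏ j ∈ B, ε j := by
  calc ∑ S ∈ A.powerset with Disjoint B S, survivalProb ε A S
      = ∑ S ∈ A.powerset, (∏ j ∈ S, if j ∉ B then 1 - ε j else 0) * ∏ j ∈ A \ S, ε j := by
        rw [sum_filter]
        refine sum_congr rfl fun S _ => ?_
        simp only [prod_ite_zero, ← disjoint_right, ite_mul, zero_mul, survivalProb]
    _ = ∏ j ∈ A, ((if j ∉ B then 1 - ε j else 0) + ε j) := (prod_add _ _ _).symm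
    _ = ∏ j ∈ B, ε j := by
        simp only [ite_add, zero_add, sub_add_cancel, ite_not, prod_ite_mem, inter_eq_right.2 hBA]

end SurvivalProb

theorem PD_union_singleton_sub_PD {X E : Type*} [Fintype E] [DecidableEq X]
    (l : E → ℝ) (C : E → Finset X) (S : Finset X) (i : X) :
    PD l C (S ∪ {i}) - PD l C S = ∑ e with i ∈ C e ∧ Disjoint (C e) S, l e := by
  classical
  rw [sub_eq_iff_eq_add, PD, PD, ← sum_union (disjoint_filter.2 fun e _ h h' =>
    not_disjoint_iff_nonempty_inter.2 h' h.2), ← filter_or]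
  refine sum_congr (filter_congr fun e _ => ?_) fun _ _ => rfl
  rw [inter_union_distrib_left, union_nonempty, ← not_disjoint_iff_nonempty_inter,
    ← not_disjoint_iff_nonempty_inter, disjoint_singleton_right]
  tauto

theorem psi_eq_sum_mul_prod_erase {X E : Type*} [Fintype X] [Fintype E] [DecidableEq X]
    (l : E → ℝ) (C : E → Finset X) (ε : X → ℝ) (i : X) :
    psi l C ε i = ∑ e with i ∈ C e, l e * ∏ j ∈ (C e).erase i, ε j := by
  set A : Finset X := univ \ {i}
  have hA : ∀ S ∈ A.powerset, i ∉ S := fun S hS hiS => by simpa [A] using mem_powerset.1 hS hiS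
  calc psi l C ε i
      = ∑ S ∈ A.powerset, survivalProb ε A S * ∑ e with i ∈ C e ∧ Disjoint (C e) S, l e :=
        sum_congr rfl fun S _ => by rw [PD_union_singleton_sub_PD]; rfl
    _ = ∑ e, ∑ S ∈ A.powerset,
          if i ∈ C e ∧ Disjoint (C e) S then survivalProb ε A S * l e else 0 := by
        simp only [mul_sum, sum_filter, mul_ite, mul_zero]
        exact sum_comm
    _ = _ := by
      rw [sum_filter]
      refine sum_congr rfl fun e _ => ?_
      split_ifs with hi
      · have hsub : (C e).erase i ⊆ A := by
          rw [erase_eq]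
          exact sdiff_subset_sdiff (subset_univ _) subset_rfl
        rw [← sum_survivalProb_disjoint ε hsub, mul_comm, sum_mul, sum_filter]
        refine sum_congr rfl fun S hS => ?_
        simp only [disjoint_erase_comm, erase_eq_of_notMem (hA S hS), hi, true_and]
      · simp only [hi, false_and, if_false, sum_const_zero]

theorem sum_psi_eq_sum_mul_sum_prod_erase {X E : Type*} [Fintype X] [Fintype E] [DecidableEq X]
    (l : E → ℝ) (C : E → Finset X) (ε : X → ℝ) :
    ∑ i, psi l C ε i = ∑ e, l e * ∑ i ∈ C e, ∏ j ∈ (C e).erase i, ε j := by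
  simp only [psi_eq_sum_mul_prod_erase, mul_sum]
  exact sum_comm' (by simp)

theorem PD_univ {X E : Type*} [Fintype X] [Fintype E] [DecidableEq X]
    (l : E → ℝ) {C : E → Finset X} (hC : ∀ e, (C e).Nonempty) :
    PD l C univ = ∑ e, l e := by
  simp [PD, hC]

theorem sum_prod_erase_inv_four_lt_one {α : Type*} [DecidableEq α] {s : Finset α}
    (hs : s.Nontrivial) : ∑ i ∈ s, ∏ _j ∈ s.erase i, (4⁻¹ : ℝ) < 1 := by
  obtain ⟨n, hn⟩ : ∃ n, s.card = n + 2 :=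
    ⟨s.card - 2, by have := one_lt_card_iff_nontrivial.2 hs; omega⟩
  have hbernoulli : 1 + ((n + 1 : ℕ) : ℝ) * 3 ≤ (1 + 3) ^ (n + 1) :=
    one_add_mul_le_pow (by norm_num) _
  calc ∑ i ∈ s, ∏ _j ∈ s.erase i, (4⁻¹ : ℝ)
      = (n + 2) * 4⁻¹ ^ (n + 1) := by
        rw [sum_congr rfl fun i hi => by rw [prod_const, card_erase_of_mem hi], sum_const, hn]
        push_cast; simp [nsmul_eq_mul]
    _ < 1 := by
        rw [inv_pow, ← div_eq_mul_inv, div_lt_one (by positivity)]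
        norm_num at hbernoulli
        linarith [n.cast_nonneg (α := ℝ)]

/-- The Pareto condition `Σ_i ψ_i = PD(X)` holds for all positive edge lengths
and all extinction probabilities in `(0,1)` if and only if every clade is a
singleton (the tree is a star tree). -/
theorem pareto_iff_star {X E : Type*} [Fintype X] [Fintype E] [DecidableEq X]
    (C : E → Finset X) (hC : ∀ e, (C e).Nonempty) :
    (∀ l : E → ℝ, (∀ e, 0 < l e) →
      ∀ ε : X → ℝ, (∀ j, 0 < ε j ∧ ε j < 1) →
        ∑ i : X, psi l C ε i = PD l C (univ : Finset X)) ↔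
    (∀ e, ∃ x, C e = {x}) := by
  simp only [sum_psi_eq_sum_mul_sum_prod_erase, PD_univ _ hC]
  constructor
  · intro hpareto e
    obtain ⟨x, hx⟩ | hnt := (hC e).exists_eq_singleton_or_nontrivial
    · exact ⟨x, hx⟩
    have hle : ∀ e', (1 : ℝ) * ∑ i ∈ C e', ∏ _j ∈ (C e').erase i, (4⁻¹ : ℝ) ≤ 1 := fun e' => by
      obtain ⟨x, hx⟩ | hnt' := (hC e').exists_eq_singleton_or_nontrivial
      · simp [hx]
      · simpa using (sum_prod_erase_inv_four_lt_one hnt').le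
    refine absurd (hpareto 1 (fun _ => one_pos) (fun _ => 4⁻¹) (fun _ => by norm_num))
      (sum_lt_sum (fun e' _ => hle e') ⟨e, mem_univ e, ?_⟩).ne
    simpa using sum_prod_erase_inv_four_lt_one hnt
  · intro hstar l _ ε _
    refine sum_congr rfl fun e _ => ?_
    obtain ⟨x, hx⟩ := hstar e
    simp [hx]
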